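/- (VP score rescaling) Let μ₀ ∈ ℝ^d, let Σ₀ be a symmetric positive definite d×d real matrix, let a ∈ (0, 1) (representing α(t)), and let β > 0. Define p(x) = N(x; a μ₀, a² Σ₀ + (1 - a²) I) and p^{(β)}(x) = N(x; a μ₀, (a²/β) Σ₀ + (1 - a²) I). Then for every x ∈ ℝ^d, ∇_x log p^{(β)}(x) = R^{VP} ∇_x log p(x), where R^{VP} = ((1 - a²) I + (a²/β) Σ₀)⁻¹ ((1 - a²) I + a² Σ₀). -/

import Mathlib

open scoped RealInnerProductSpace Matrix

/-! The score of `N(m, Σ)` is `x ↦ Σ⁻¹ (m - x)`. Both densities have the same mean `m = a μ₀`, so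
with `Σ = a² Σ₀ + (1 - a²) I` and `Σ_β = (a²/β) Σ₀ + (1 - a²) I` (both positive definite as
`|a| < 1` and `β > 0`), the tempered score is `Σ_β⁻¹ (m - x) = (Σ_β⁻¹ Σ) (Σ⁻¹ (m - x))`. -/

/-- The multivariate Gaussian density `N(x; μ, S)` on `ℝ^d`. -/
noncomputable def gaussianDensity {d : ℕ} (μ : EuclideanSpace ℝ (Fin d))
    (S : Matrix (Fin d) (Fin d) ℝ) (x : EuclideanSpace ℝ (Fin d)) : ℝ :=
  (2 * Real.pi) ^ (-(d : ℝ) / 2) * S.det ^ (-(1 : ℝ) / 2) *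
    Real.exp (-(1 / 2 : ℝ) * ⟪x - μ, (Matrix.toEuclideanLin S⁻¹) (x - μ)⟫)

theorem LinearMap.IsSymmetric.hasGradientAt_inner_sub_apply_sub {E : Type*}
    [NormedAddCommGroup E] [InnerProductSpace ℝ E] [CompleteSpace E] {T : E →L[ℝ] E}
    (hT : (T : E →ₗ[ℝ] E).IsSymmetric) (μ x : E) :
    HasGradientAt (fun y => ⟪y - μ, T (y - μ)⟫) ((2 : ℝ) • T (x - μ)) x := by
  have hf : (fun y => ⟪y - μ, T (y - μ)⟫) = T.reApplyInnerSelf ∘ (· - μ) := by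
    funext y
    simp [ContinuousLinearMap.reApplyInnerSelf_apply, real_inner_comm]
  rw [hasGradientAt_iff_hasFDerivAt, hf]
  refine ((hT.hasStrictFDerivAt_reApplyInnerSelf (x - μ)).hasFDerivAt.comp x
    ((hasFDerivAt_id x).sub_const μ)).congr_fderiv ?_
  ext v
  simp

theorem Matrix.PosDef.smul_add_smul_one {n : Type*} [Fintype n] [DecidableEq n]
    {S : Matrix n n ℝ} (hS : S.PosDef) {c s : ℝ} (hc : 0 ≤ c) (hs : 0 < s) :
    (c • S + s • (1 : Matrix n n ℝ)).PosDef :=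
  Matrix.PosDef.posSemidef_add (hS.posSemidef.smul hc) (Matrix.PosDef.one.smul hs)

theorem log_gaussianDensity {d : ℕ} (μ : EuclideanSpace ℝ (Fin d))
    {S : Matrix (Fin d) (Fin d) ℝ} (hS : S.PosDef) (x : EuclideanSpace ℝ (Fin d)) :
    Real.log (gaussianDensity μ S x) =
      Real.log ((2 * Real.pi) ^ (-(d : ℝ) / 2) * S.det ^ (-(1 : ℝ) / 2)) -
        (1 / 2 : ℝ) * ⟪x - μ, Matrix.toEuclideanLin S⁻¹ (x - μ)⟫ := by
  have hc : 0 < (2 * Real.pi) ^ (-(d : ℝ) / 2) * S.det ^ (-(1 : ℝ) / 2) := by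
    have := hS.det_pos
    positivity
  rw [gaussianDensity, Real.log_mul hc.ne' (Real.exp_ne_zero _), Real.log_exp]
  ring

theorem gradient_log_gaussianDensity {d : ℕ} (μ : EuclideanSpace ℝ (Fin d))
    {S : Matrix (Fin d) (Fin d) ℝ} (hS : S.PosDef) (x : EuclideanSpace ℝ (Fin d)) :
    gradient (fun y => Real.log (gaussianDensity μ S y)) x =
      -Matrix.toEuclideanLin S⁻¹ (x - μ) := by
  have hsymm : (Matrix.toEuclideanLin S⁻¹).IsSymmetric :=
    Matrix.isSymmetric_toEuclideanLin_iff.mpr hS.inv.isHermitian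
  have hquad := LinearMap.IsSymmetric.hasGradientAt_inner_sub_apply_sub
    (T := Matrix.toEuclideanCLM (n := Fin d) (𝕜 := ℝ) S⁻¹) hsymm μ x
  simp_rw [log_gaussianDensity μ hS]
  refine HasGradientAt.gradient ?_
  rw [hasGradientAt_iff_hasFDerivAt]
  refine ((hquad.hasFDerivAt.const_mul (1 / 2 : ℝ)).const_sub _).congr_fderiv ?_
  ext v
  simp [← Matrix.coe_toEuclideanCLM_eq_toEuclideanLin]

/-- VP score rescaling: with `p = N(a μ₀, a² Σ₀ + (1 - a²) I)` and
`p^{(β)} = N(a μ₀, (a²/β) Σ₀ + (1 - a²) I)`, for every `x`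
`∇ log p^{(β)}(x) = R^{VP} ∇ log p(x)` where
`R^{VP} = ((1 - a²) I + (a²/β) Σ₀)⁻¹ ((1 - a²) I + a² Σ₀)`. -/
theorem vp_score_rescaling {d : ℕ} (μ₀ : EuclideanSpace ℝ (Fin d))
    (S₀ : Matrix (Fin d) (Fin d) ℝ) (hS₀ : S₀.PosDef)
    (a : ℝ) (ha : a ∈ Set.Ioo (0 : ℝ) 1) (β : ℝ) (hβ : 0 < β) :
    ∀ x : EuclideanSpace ℝ (Fin d),
      gradient (fun y =>
          Real.log (gaussianDensity (a • μ₀)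
            ((a ^ 2 / β) • S₀ + (1 - a ^ 2) • (1 : Matrix (Fin d) (Fin d) ℝ)) y)) x
        = (Matrix.toEuclideanLin
            (((1 - a ^ 2) • (1 : Matrix (Fin d) (Fin d) ℝ) + (a ^ 2 / β) • S₀)⁻¹ *
              ((1 - a ^ 2) • (1 : Matrix (Fin d) (Fin d) ℝ) + a ^ 2 • S₀)))
            (gradient (fun y =>
              Real.log (gaussianDensity (a • μ₀)
                (a ^ 2 • S₀ + (1 - a ^ 2) • (1 : Matrix (Fin d) (Fin d) ℝ)) y)) x) := by
  intro x
  have h1a : 0 < 1 - a ^ 2 := by nlinarith [ha.1, ha.2]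
  have hSβ := hS₀.smul_add_smul_one (by positivity : 0 ≤ a ^ 2 / β) h1a
  have hS := hS₀.smul_add_smul_one (sq_nonneg a) h1a
  rw [gradient_log_gaussianDensity _ hSβ, gradient_log_gaussianDensity _ hS, map_neg,
    ← LinearMap.comp_apply, ← Matrix.toLpLin_mul_same, add_comm _ (a ^ 2 • S₀),
    add_comm _ ((a ^ 2 / β) • S₀), Matrix.mul_nonsing_inv_cancel_right _ _ hS.det_pos.ne'.isUnit]
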